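/- arXiv:1603.08404 — 4 statements merged into one kernel-verified Lean document; each statement's English description precedes it below -/
import Mathlib

section
/- Let α be a unital twisted partial action of a group G on a unital ring R and H a subgroup of G. Then the set A of elements of the partial crossed product R*_{α,w}G whose support is contained in G \ H is a (R*_{α_H,w_H}H, R*_{α_H,w_H}H)-sub-bimodule of R*_{α,w}G, and R*_{α,w}G = (R*_{α_H,w_H}H) ⊕ A as left (and as right) R*_{α_H,w_H}H-modules. -/
/-- A unital twisted partial action of a group `G` on a unital ring `R`
(Dokuchaev–Exel–Simón).  The ideal `D g` is the ideal generated by the central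
idempotent `e g`, i.e. `D g = {x | e g * x = x}`;  `act g` is the isomorphism
`α_g : D g⁻¹ → D g` (its values outside `D g⁻¹` are irrelevant) with inverse
`inv g`, and `w g h` is the invertible twisting element of `D g * D (g*h)`
with inverse `winv g h`. -/
structure UnitalTwistedPartialAction (G : Type) [Group G] (R : Type) [Ring R] where
  e : G → R
  idem : ∀ g, e g * e g = e g
  central : ∀ g r, e g * r = r * e g
  e_one : e 1 = 1
  act : G → R → R
  inv : G → R → R
  w : G → G → R
  winv : G → G → R
  act_mem : ∀ g x, e g⁻¹ * x = x → e g * act g x = act g x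
  act_add : ∀ g x y, e g⁻¹ * x = x → e g⁻¹ * y = y →
    act g (x + y) = act g x + act g y
  act_mul : ∀ g x y, e g⁻¹ * x = x → e g⁻¹ * y = y →
    act g (x * y) = act g x * act g y
  inv_act : ∀ g x, e g⁻¹ * x = x → inv g (act g x) = x
  act_inv : ∀ g x, e g * x = x → act g (inv g x) = x
  act_one : ∀ x, act 1 x = x
  -- α_g(D_{g⁻¹} D_h) = D_g D_{gh}
  act_range : ∀ g h x, e g⁻¹ * x = x → e h * x = x → e (g * h) * act g x = act g x
  act_range' : ∀ g h y, e g * y = y → e (g * h) * y = y →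
    ∃ x, e g⁻¹ * x = x ∧ e h * x = x ∧ act g x = y
  w_mem : ∀ g h, e g * w g h = w g h ∧ e (g * h) * w g h = w g h
  w_winv : ∀ g h, w g h * winv g h = e g * e (g * h)
  winv_w : ∀ g h, winv g h * w g h = e g * e (g * h)
  w_one_left : ∀ g, w 1 g = e g
  w_one_right : ∀ g, w g 1 = e g
  -- α_g ∘ α_h (a) = w_{g,h} α_{gh}(a) w_{g,h}⁻¹  for a ∈ D_{h⁻¹} D_{(gh)⁻¹}
  comp : ∀ g h a, e h⁻¹ * a = a → e (h⁻¹ * g⁻¹) * a = a →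
    act g (act h a) = w g h * act (g * h) a * winv g h
  -- the cocycle identity α_g(a w_{h,t}) w_{g,ht} = α_g(a) w_{g,h} w_{gh,t}
  cocycle : ∀ g h t a, e g⁻¹ * a = a → e h * a = a → e (h * t) * a = a →
    act g (a * w h t) * w g (h * t) = act g a * w g h * w (g * h) t

/-- A realization of the partial crossed product `R *_{α,w} G`:  a ring `A`
together with maps `δ g : D g → A` (written as maps `R → A` that only depend
on the `D g`-component) such that `A = ⊕_{g ∈ G} δ g (D g)` with the crossed
product multiplication `(a δ_g)(b δ_h) = α_g(α_g⁻¹(a) b) w_{g,h} δ_{gh}`. -/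
structure IsCrossedProduct {G R : Type} [Group G] [Ring R]
    (pa : UnitalTwistedPartialAction G R) (A : Type) [Ring A]
    (δ : G → R → A) : Prop where
  proj : ∀ g a, δ g a = δ g (pa.e g * a)
  add : ∀ g a b, δ g (a + b) = δ g a + δ g b
  mul : ∀ g h a b, pa.e g * a = a → pa.e h * b = b →
    δ g a * δ h b = δ (g * h) (pa.act g (pa.inv g a * b) * pa.w g h)
  one : δ 1 1 = 1
  indep : ∀ (s : Finset G) (a : G → R), (∀ g, pa.e g * a g = a g) →
    (∑ g ∈ s, δ g (a g)) = 0 → ∀ g ∈ s, a g = 0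
  span : ∀ x : A, ∃ (s : Finset G) (a : G → R),
    (∀ g, pa.e g * a g = a g) ∧ x = ∑ g ∈ s, δ g (a g)


/-- The set of elements of the crossed product whose support is contained in
the set `T ⊆ G`, i.e. finite sums `∑ δ g (a g)` over `g ∈ T`. -/
def suppIn {G R A : Type} [Group G] [Ring R] [Ring A]
    (δ : G → R → A) (T : Set G) : Set A :=
  {x | ∃ (s : Finset G) (a : G → R), (∀ g ∈ s, g ∈ T) ∧ x = ∑ g ∈ s, δ g (a g)}

section Aux

variable {G R A : Type} [Group G] [Ring R] [Ring A]
  {pa : UnitalTwistedPartialAction G R} {δ : G → R → A}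

private lemma ea (pa : UnitalTwistedPartialAction G R) (g : G) (r : R) :
    pa.e g * (pa.e g * r) = pa.e g * r := by
  rw [← mul_assoc, pa.idem]

private lemma δ_zero (hcp : IsCrossedProduct pa A δ) (g : G) : δ g 0 = 0 := by
  have h := hcp.add g 0 0
  rw [add_zero] at h
  exact left_eq_add.mp h

private lemma δ_neg (hcp : IsCrossedProduct pa A δ) (g : G) (a : R) :
    δ g (-a) = -δ g a := by
  have h := hcp.add g a (-a)
  rw [add_neg_cancel, δ_zero hcp] at h
  exact (eq_neg_of_add_eq_zero_right h.symm)

private lemma mem_zero (hcp : IsCrossedProduct pa A δ) (T : Set G) :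
    (0 : A) ∈ suppIn δ T :=
  ⟨∅, fun _ => 0, by simp, by simp⟩

private lemma mem_add (hcp : IsCrossedProduct pa A δ) {T : Set G} {x y : A}
    (hx : x ∈ suppIn δ T) (hy : y ∈ suppIn δ T) : x + y ∈ suppIn δ T := by
  classical
  obtain ⟨s, a, hs, rfl⟩ := hx
  obtain ⟨t, b, ht, rfl⟩ := hy
  refine ⟨s ∪ t, fun g => (if g ∈ s then pa.e g * a g else 0) +
      (if g ∈ t then pa.e g * b g else 0), ?_, ?_⟩
  · intro g hg
    rcases Finset.mem_union.mp hg with h | h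
    · exact hs g h
    · exact ht g h
  · rw [Finset.sum_congr rfl (fun g _ => hcp.add g _ _), Finset.sum_add_distrib]
    congr 1
    · rw [← Finset.sum_subset Finset.subset_union_left
        (fun g _ hg => by simp [hg, δ_zero hcp])]
      refine Finset.sum_congr rfl fun g hg => ?_
      simp only [hg, if_true]
      exact hcp.proj g (a g)
    · rw [← Finset.sum_subset Finset.subset_union_right
        (fun g _ hg => by simp [hg, δ_zero hcp])]
      refine Finset.sum_congr rfl fun g hg => ?_
      simp only [hg, if_true]
      exact hcp.proj g (b g)

private lemma mem_neg (hcp : IsCrossedProduct pa A δ) {T : Set G} {x : A}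
    (hx : x ∈ suppIn δ T) : -x ∈ suppIn δ T := by
  obtain ⟨s, a, hs, rfl⟩ := hx
  exact ⟨s, fun g => -(a g), hs, by
    rw [← Finset.sum_neg_distrib]
    exact Finset.sum_congr rfl fun g _ => (δ_neg hcp g (a g)).symm⟩

private lemma mem_single (hcp : IsCrossedProduct pa A δ) {T : Set G} {k : G}
    (hk : k ∈ T) (c : R) : δ k c ∈ suppIn δ T :=
  ⟨{k}, fun _ => c, by simpa using hk, by simp⟩

private lemma mem_sum (hcp : IsCrossedProduct pa A δ) {T : Set G} {ι : Type}
    (s : Finset ι) (f : ι → A) (h : ∀ i ∈ s, f i ∈ suppIn δ T) :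
    (∑ i ∈ s, f i) ∈ suppIn δ T :=
  Finset.sum_induction f (· ∈ suppIn δ T) (fun _ _ ha hb => mem_add hcp ha hb)
    (mem_zero hcp T) h

end Aux

/-- Let `α` be a unital twisted partial action of `G` on `R`
and `H ≤ G`.  Then `A = {x ∈ R*_{α,w}G | supp x ⊆ G \ H}` is a sub-bimodule of
`R*_{α,w}G` over the subring `R*_{α_H,w_H}H` (the elements supported in `H`),
and `R*_{α,w}G = (R*_{α_H,w_H}H) ⊕ A` as left and right
`R*_{α_H,w_H}H`-modules. -/
theorem crossedProduct_subgroup_direct_summand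
    {G R : Type} [Group G] [Ring R]
    (pa : UnitalTwistedPartialAction G R)
    (A : Type) [Ring A] (δ : G → R → A)
    (hcp : IsCrossedProduct pa A δ) (H : Subgroup G) :
    ((0 : A) ∈ suppIn δ ((H : Set G)ᶜ) ∧
      (∀ x ∈ suppIn δ ((H : Set G)ᶜ), ∀ y ∈ suppIn δ ((H : Set G)ᶜ),
        x + y ∈ suppIn δ ((H : Set G)ᶜ)) ∧
      (∀ x ∈ suppIn δ ((H : Set G)ᶜ), -x ∈ suppIn δ ((H : Set G)ᶜ)) ∧
      (∀ x ∈ suppIn δ (H : Set G), ∀ y ∈ suppIn δ ((H : Set G)ᶜ),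
        x * y ∈ suppIn δ ((H : Set G)ᶜ) ∧ y * x ∈ suppIn δ ((H : Set G)ᶜ))) ∧
    (∀ x : A, ∃ y ∈ suppIn δ (H : Set G), ∃ z ∈ suppIn δ ((H : Set G)ᶜ),
      x = y + z) ∧
    (∀ x : A, x ∈ suppIn δ (H : Set G) → x ∈ suppIn δ ((H : Set G)ᶜ) → x = 0) := by
  classical
  refine ⟨⟨mem_zero hcp _, fun x hx y hy => mem_add hcp hx hy,
    fun x hx => mem_neg hcp hx, ?_⟩, ?_, ?_⟩
  · -- bimodule multiplication
    rintro x ⟨s, a, hs, rfl⟩ y ⟨t, b, ht, rfl⟩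
    have key : ∀ g ∈ s, ∀ h ∈ t,
        δ g (a g) * δ h (b h) ∈ suppIn δ ((H : Set G)ᶜ) ∧
        δ h (b h) * δ g (a g) ∈ suppIn δ ((H : Set G)ᶜ) := by
      intro g hg h hh
      have hgH : g ∈ H := hs g hg
      have hhH : h ∉ H := ht h hh
      constructor
      · rw [hcp.proj g (a g), hcp.proj h (b h),
          hcp.mul g h _ _ (ea pa g _) (ea pa h _)]
        refine mem_single hcp ?_ _
        intro hmem
        exact hhH (by simpa using H.mul_mem (H.inv_mem hgH) hmem)
      · rw [hcp.proj h (b h), hcp.proj g (a g),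
          hcp.mul h g _ _ (ea pa h _) (ea pa g _)]
        refine mem_single hcp ?_ _
        intro hmem
        exact hhH (by simpa using H.mul_mem hmem (H.inv_mem hgH))
    constructor
    · rw [Finset.sum_mul]
      refine mem_sum hcp s _ fun g hg => ?_
      rw [Finset.mul_sum]
      exact mem_sum hcp t _ fun h hh => (key g hg h hh).1
    · rw [Finset.sum_mul]
      refine mem_sum hcp t _ fun h hh => ?_
      rw [Finset.mul_sum]
      exact mem_sum hcp s _ fun g hg => (key g hg h hh).2
  · -- decomposition
    intro x
    obtain ⟨s, a, _, rfl⟩ := hcp.span x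
    refine ⟨∑ g ∈ s.filter (· ∈ H), δ g (a g),
      ⟨s.filter (· ∈ H), a, fun g hg => (Finset.mem_filter.mp hg).2, rfl⟩,
      ∑ g ∈ s.filter (¬ · ∈ H), δ g (a g),
      ⟨s.filter (¬ · ∈ H), a, fun g hg => (Finset.mem_filter.mp hg).2, rfl⟩, ?_⟩
    rw [Finset.sum_filter_add_sum_filter_not]
  · -- uniqueness
    rintro x ⟨s, a, hs, rfl⟩ ⟨t, b, ht, hx⟩
    set c : G → R := fun g => (if g ∈ s then pa.e g * a g else 0) +
      (if g ∈ t then -(pa.e g * b g) else 0) with hc_def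
    have hc : ∀ g, pa.e g * c g = c g := by
      intro g
      simp only [hc_def, mul_add, mul_ite, mul_zero, mul_neg, ea pa]
    have hst : ∀ g ∈ s, g ∉ t := by
      intro g hg hgt
      exact (ht g hgt) (hs g hg)
    have hsum : (∑ g ∈ s ∪ t, δ g (c g)) = 0 := by
      have h1 : (∑ g ∈ s ∪ t, δ g (c g)) =
          (∑ g ∈ s ∪ t, δ g (if g ∈ s then pa.e g * a g else 0)) +
          (∑ g ∈ s ∪ t, δ g (if g ∈ t then -(pa.e g * b g) else 0)) := by
        rw [← Finset.sum_add_distrib]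
        exact Finset.sum_congr rfl fun g _ => hcp.add g _ _
      have h2 : (∑ g ∈ s ∪ t, δ g (if g ∈ s then pa.e g * a g else 0)) =
          ∑ g ∈ s, δ g (a g) := by
        rw [← Finset.sum_subset Finset.subset_union_left
          (fun g _ hg => by simp [hg, δ_zero hcp])]
        refine Finset.sum_congr rfl fun g hg => ?_
        simp only [hg, if_true]
        exact (hcp.proj g (a g)).symm
      have h3 : (∑ g ∈ s ∪ t, δ g (if g ∈ t then -(pa.e g * b g) else 0)) =
          -∑ g ∈ t, δ g (b g) := by
        rw [← Finset.sum_subset Finset.subset_union_right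
          (fun g _ hg => by simp [hg, δ_zero hcp]), ← Finset.sum_neg_distrib]
        refine Finset.sum_congr rfl fun g hg => ?_
        simp only [hg, if_true]
        rw [δ_neg hcp, ← hcp.proj g (b g)]
      rw [h1, h2, h3, ← hx, add_neg_cancel]
    have hzero := hcp.indep (s ∪ t) c hc hsum
    have : ∀ g ∈ s, δ g (a g) = 0 := by
      intro g hg
      have hcg := hzero g (Finset.mem_union_left _ hg)
      simp only [hc_def, hg, if_true, hst g hg, if_false, add_zero] at hcg
      rw [hcp.proj g (a g), hcg, δ_zero hcp]
    rw [Finset.sum_congr rfl this, Finset.sum_const_zero]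
end

section
/- Let α be a unital twisted partial action of a group G on a unital ring R and H a subgroup of G. If the partial crossed product R*_{α,w}G is right artinian, then R*_{α_H,w_H}H is right artinian. -/
/-- A ring is semilocal if it is semisimple modulo its Jacobson radical. -/
def IsSemilocalRing (A : Type) [Ring A] : Prop :=
  IsSemisimpleRing (TwoSidedIdeal.jacobson (⊥ : TwoSidedIdeal A)).ringCon.Quotient

/-- A ring is semiprimary if it is semilocal and its Jacobson radical is nilpotent. -/
def IsSemiprimaryRing' (A : Type) [Ring A] : Prop :=
  IsSemilocalRing A ∧ ∃ n : ℕ, 0 < n ∧ ∀ f : Fin n → A,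
    (∀ i, f i ∈ TwoSidedIdeal.jacobson (⊥ : TwoSidedIdeal A)) →
      (List.ofFn f).prod = 0

/-- A ring is right artinian iff its opposite ring is (left) artinian. -/
def IsRightArtinianRing (A : Type) [Ring A] : Prop := IsArtinianRing Aᵐᵒᵖ

/-- A ring is right noetherian iff its opposite ring is (left) noetherian. -/
def IsRightNoetherianRing (A : Type) [Ring A] : Prop := IsNoetherianRing Aᵐᵒᵖ

/-!
Let `B` be the part of the crossed product supported in `H` and `C` the part supported in
`G \ H`. Independence of the `δ g (D g)` makes `A = B ⊕ C` additively, and `B * C ⊆ C` because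
`h ∈ H`, `g ∉ H` forces `h * g ∉ H`. So `B` is a direct summand of `A` as a left `B`-module,
hence the `B`-component of the extended right ideal `I * A` is `I` again: extension is an order
embedding of right ideals of `B` into right ideals of `A`, and the descending chain condition
descends along it.
-/

open Pointwise MulOpposite

theorem Subring.comap_map_op_subtype_le {A : Type*} [Ring A] {B : Subring A}
    {C : AddSubmonoid A} (hBC : IsCompl B.toAddSubmonoid C)
    (hmul : ∀ b ∈ B, ∀ c ∈ C, b * c ∈ C) (I : Ideal Bᵐᵒᵖ) :
    (I.map (RingHom.op B.subtype)).comap (RingHom.op B.subtype) ≤ I := by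
  -- quantified over all right multiples so that the induction survives the `smul` step
  have key : ∀ y ∈ I.map (RingHom.op B.subtype), ∀ a : A,
      ∃ i ∈ I, ∃ c ∈ C, unop y * a = ↑(unop i) + c := by
    intro y hy
    induction hy using Submodule.span_induction with
    | mem y hy =>
      obtain ⟨i, hi, rfl⟩ := hy
      intro a
      obtain ⟨b, hb, c, hc, rfl⟩ :=
        AddSubmonoid.mem_sup.mp (hBC.codisjoint.eq_top ▸ AddSubmonoid.mem_top a)
      exact ⟨op ⟨b, hb⟩ * i, I.mul_mem_left _ hi, _, hmul _ (unop i).2 c hc,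
        by simp [mul_add]⟩
    | zero => exact fun _ => ⟨0, I.zero_mem, 0, C.zero_mem, by simp⟩
    | add y z _ _ hy hz =>
      intro a
      obtain ⟨i, hi, c, hc, h⟩ := hy a
      obtain ⟨j, hj, d, hd, h'⟩ := hz a
      exact ⟨i + j, I.add_mem hi hj, c + d, C.add_mem hc hd, by simp [add_mul, h, h']; abel⟩
    | smul s y _ hy =>
      intro a
      simpa [mul_assoc] using hy (unop s * a)
  intro x hx
  obtain ⟨i, hi, c, hc, h⟩ := key _ hx 1
  have hc_eq : c = ↑(unop x) - ↑(unop i) := by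
    simp only [RingHom.op_apply_apply, Subring.coe_subtype, MulOpposite.unop_op, mul_one] at h
    rw [h, add_sub_cancel_left]
  have hc0 : c = 0 :=
    AddSubmonoid.disjoint_def.mp hBC.disjoint (hc_eq ▸ B.sub_mem (unop x).2 (unop i).2) hc
  have hxi : x = i := by
    apply MulOpposite.unop_injective
    apply Subtype.ext
    simpa [hc0] using h
  exact hxi ▸ hi

theorem Subring.isRightArtinianRing_of_isCompl {A : Type} [Ring A] (B : Subring A)
    (C : AddSubmonoid A) (hBC : IsCompl B.toAddSubmonoid C)
    (hmul : ∀ b ∈ B, ∀ c ∈ C, b * c ∈ C) (hA : IsRightArtinianRing A) :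
    IsRightArtinianRing B := by
  have : IsArtinianRing Aᵐᵒᵖ := hA
  have hinj : Function.Injective (Ideal.map (RingHom.op B.subtype)) :=
    Function.LeftInverse.injective (g := Ideal.comap (RingHom.op B.subtype)) fun I =>
      le_antisymm (Subring.comap_map_op_subtype_le hBC hmul I) Ideal.le_comap_map
  exact (Monotone.strictMono_of_injective (fun _ _ h => Ideal.map_mono h) hinj).wellFoundedLT

/-- The part `⊕_{g ∈ S} D_g δ_g` of the crossed product supported in `S`. -/
def deltaSpan {G R A : Type} [Ring A] (δ : G → R → A) (S : Set G) : AddSubmonoid A :=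
  AddSubmonoid.closure {x | ∃ g ∈ S, ∃ a : R, x = δ g a}

section deltaSpan

variable {G R A : Type} [Ring A] {δ : G → R → A}

theorem delta_mem_deltaSpan {S : Set G} {g : G} (hg : g ∈ S) (a : R) :
    δ g a ∈ deltaSpan δ S :=
  AddSubmonoid.subset_closure ⟨g, hg, a, rfl⟩

theorem deltaSpan_mono {S T : Set G} (h : S ⊆ T) : deltaSpan δ S ≤ deltaSpan δ T :=
  AddSubmonoid.closure_mono fun _ ⟨g, hg, a, hx⟩ => ⟨g, h hg, a, hx⟩

theorem deltaSpan_union (S T : Set G) :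
    deltaSpan δ (S ∪ T) = deltaSpan δ S ⊔ deltaSpan δ T := by
  rw [deltaSpan, deltaSpan, deltaSpan, ← AddSubmonoid.closure_union]
  congr 1
  ext x
  simp [or_and_right, exists_or]

end deltaSpan

namespace IsCrossedProduct

variable {G R A : Type} [Group G] [Ring R] [Ring A] {pa : UnitalTwistedPartialAction G R}
  {δ : G → R → A} (hcp : IsCrossedProduct pa A δ)
include hcp

def deltaHom (g : G) : R →+ A := AddMonoidHom.mk' (δ g) (hcp.add g)

noncomputable def sumDelta : (G →₀ R) →+ A := Finsupp.liftAddHom hcp.deltaHom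

theorem sumDelta_single (g : G) (a : R) : hcp.sumDelta (Finsupp.single g a) = δ g a := by
  rw [sumDelta, Finsupp.liftAddHom_apply_single]
  rfl

theorem deltaSpan_univ : deltaSpan δ (Set.univ : Set G) = ⊤ := by
  refine eq_top_iff.mpr fun x _ => ?_
  obtain ⟨s, a, -, rfl⟩ := hcp.span x
  exact AddSubmonoid.sum_mem _ fun g _ => delta_mem_deltaSpan (Set.mem_univ g) (a g)

theorem eq_zero_of_sumDelta_eq_zero {a : G →₀ R} (ha : ∀ g, pa.e g * a g = a g)
    (h : hcp.sumDelta a = 0) : a = 0 := by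
  ext g
  by_cases hg : g ∈ a.support
  · exact hcp.indep a.support a ha (by simpa [sumDelta, deltaHom, Finsupp.sum] using h) g hg
  · simpa using hg

theorem exists_finsupp_of_mem_deltaSpan {S : Set G} {x : A} (hx : x ∈ deltaSpan δ S) :
    ∃ a : G →₀ R, (∀ g, pa.e g * a g = a g) ∧ ↑a.support ⊆ S ∧
      hcp.sumDelta a = x := by
  classical
  induction hx using AddSubmonoid.closure_induction with
  | mem x hx =>
    obtain ⟨g, hg, r, rfl⟩ := hx
    refine ⟨Finsupp.single g (pa.e g * r), fun k => ?_, ?_, ?_⟩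
    · simp only [Finsupp.single_apply]
      split_ifs with hk
      · rw [← hk, ← mul_assoc, pa.idem]
      · rw [mul_zero]
    · exact (Finset.coe_subset.mpr Finsupp.support_single_subset).trans (by simpa using hg)
    · rw [sumDelta_single, ← hcp.proj]
  | zero => exact ⟨0, by simp, by simp, map_zero _⟩
  | add x y _ _ hx hy =>
    obtain ⟨a, ha, haS, rfl⟩ := hx
    obtain ⟨b, hb, hbS, rfl⟩ := hy
    refine ⟨a + b, fun g => by simp [mul_add, ha, hb], ?_, map_add _ _ _⟩
    exact (Finset.coe_subset.mpr Finsupp.support_add).trans (by simpa using ⟨haS, hbS⟩)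

theorem disjoint_deltaSpan {S T : Set G} (hST : Disjoint S T) :
    Disjoint (deltaSpan δ S) (deltaSpan δ T) := by
  refine AddSubmonoid.disjoint_def.mpr fun {x} hxS hxT => ?_
  obtain ⟨a, ha, haS, rfl⟩ := hcp.exists_finsupp_of_mem_deltaSpan hxS
  obtain ⟨b, hb, hbT, hba⟩ := hcp.exists_finsupp_of_mem_deltaSpan hxT
  have hab : a = b := sub_eq_zero.mp <| hcp.eq_zero_of_sumDelta_eq_zero
    (fun g => by simp [mul_sub, ha, hb]) (by rw [map_sub, hba, sub_self])
  subst hab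
  have : a.support = ∅ := Finset.coe_eq_empty.mp (Set.subset_empty_iff.mp (hST haS hbT))
  simp [Finsupp.support_eq_empty.mp this]

theorem isCompl_deltaSpan_compl (S : Set G) : IsCompl (deltaSpan δ S) (deltaSpan δ Sᶜ) :=
  ⟨hcp.disjoint_deltaSpan disjoint_compl_right,
    codisjoint_iff.mpr (by rw [← deltaSpan_union, Set.union_compl_self, hcp.deltaSpan_univ])⟩

theorem one_mem_deltaSpan {S : Set G} (hS : (1 : G) ∈ S) : (1 : A) ∈ deltaSpan δ S :=
  hcp.one ▸ delta_mem_deltaSpan hS 1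

theorem neg_mem_deltaSpan {S : Set G} {x : A} (hx : x ∈ deltaSpan δ S) :
    -x ∈ deltaSpan δ S := by
  induction hx using AddSubmonoid.closure_induction with
  | mem x hx =>
    obtain ⟨g, hg, r, rfl⟩ := hx
    exact map_neg (hcp.deltaHom g) r ▸ delta_mem_deltaSpan hg (-r)
  | zero => simp
  | add x y _ _ hx hy => simpa [add_comm] using (deltaSpan δ S).add_mem hx hy

theorem mul_mem_deltaSpan {S T : Set G} {x y : A} (hx : x ∈ deltaSpan δ S)
    (hy : y ∈ deltaSpan δ T) : x * y ∈ deltaSpan δ (S * T) := by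
  have hxy := AddSubmonoid.mul_mem_mul hx hy
  rw [deltaSpan, deltaSpan, AddSubmonoid.closure_mul_closure] at hxy
  refine AddSubmonoid.closure_le.mpr ?_ hxy
  rintro _ ⟨_, ⟨g, hg, a, rfl⟩, _, ⟨h, hh, b, rfl⟩, rfl⟩
  change δ g a * δ h b ∈ deltaSpan δ (S * T)
  rw [hcp.proj g a, hcp.proj h b,
    hcp.mul g h _ _ (by rw [← mul_assoc, pa.idem]) (by rw [← mul_assoc, pa.idem])]
  exact delta_mem_deltaSpan (Set.mul_mem_mul hg hh) _

theorem closure_toAddSubmonoid_eq_deltaSpan (H : Subgroup G) :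
    (Subring.closure {x : A | ∃ h ∈ H, ∃ a : R, x = δ h a}).toAddSubmonoid =
      deltaSpan δ H := by
  refine le_antisymm (fun x hx => ?_)
    (AddSubmonoid.closure_le.mpr fun x hx => Subring.subset_closure hx)
  induction hx using Subring.closure_induction with
  | mem x hx => exact AddSubmonoid.subset_closure hx
  | zero => exact zero_mem _
  | one => exact hcp.one_mem_deltaSpan H.one_mem
  | add x y _ _ hx hy => exact add_mem hx hy
  | neg x _ hx => exact hcp.neg_mem_deltaSpan hx
  | mul x y _ _ hx hy =>
    exact deltaSpan_mono (H.toSubmonoid.coe_mul_self_eq.subset) (hcp.mul_mem_deltaSpan hx hy)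

end IsCrossedProduct

/-- Let `α` be a unital twisted partial action of `G` on `R`
and `H ≤ G`.  If the partial crossed product `R*_{α,w}G` is right artinian,
then so is the subring `R*_{α_H,w_H}H` (the subring generated by the elements
`δ h a` with `h ∈ H`). -/
theorem crossedProduct_subgroup_rightArtinian
    {G R : Type} [Group G] [Ring R]
    (pa : UnitalTwistedPartialAction G R)
    (A : Type) [Ring A] (δ : G → R → A)
    (hcp : IsCrossedProduct pa A δ) (H : Subgroup G)
    (hart : IsRightArtinianRing A) :
    IsRightArtinianRing
      (Subring.closure {x : A | ∃ h ∈ H, ∃ a : R, x = δ h a}) := by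
  have hB := hcp.closure_toAddSubmonoid_eq_deltaSpan H
  have hHc : (H : Set G) * (H : Set G)ᶜ ⊆ (H : Set G)ᶜ := by
    rintro _ ⟨h, hh, g, hg, rfl⟩
    exact fun hhg => hg ((H.mul_mem_cancel_left hh).mp hhg)
  refine Subring.isRightArtinianRing_of_isCompl _ (deltaSpan δ (H : Set G)ᶜ)
    (hB ▸ hcp.isCompl_deltaSpan_compl H) (fun b hb c hc => ?_) hart
  exact deltaSpan_mono hHc (hcp.mul_mem_deltaSpan (hB ▸ hb) hc)
end

section
/- There exists a unital partial action α of the group ℤ on the ring R = K e₁ ⊕ K e₂ (K a field, e₁, e₂ central orthogonal idempotents) such that the partial skew group ring R*_α ℤ is right artinian, ℤ is infinite, and α is not of finite type. Concretely: D₀ = R, D₋₁ = K e₁, D₁ = K e₂, D_i = 0 for |i| ≥ 2, α₁(e₁) = e₂, α₋₁(e₂) = e₁. -/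
/-- A unital (untwisted) partial action of a group `G` on a unital ring `R`:
the domain `D g` is the ideal generated by the central idempotent `e g`
(`D g = {x | e g * x = x}`), and `act g` is the ring isomorphism
`α_g : D g⁻¹ → D g` (values outside `D g⁻¹` are irrelevant). -/
structure PartialAction (G : Type) [Group G] (R : Type) [Ring R] where
  e : G → R
  idem : ∀ g, e g * e g = e g
  central : ∀ g r, e g * r = r * e g
  e_one : e 1 = 1
  act : G → R → R
  act_mem : ∀ g x, e g⁻¹ * x = x → e g * act g x = act g x
  act_add : ∀ g x y, e g⁻¹ * x = x → e g⁻¹ * y = y →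
    act g (x + y) = act g x + act g y
  act_mul : ∀ g x y, e g⁻¹ * x = x → e g⁻¹ * y = y →
    act g (x * y) = act g x * act g y
  act_one : ∀ x, act 1 x = x
  inv_act : ∀ g x, e g⁻¹ * x = x → act g⁻¹ (act g x) = x
  -- α_g(D_{g⁻¹} ∩ D_h) = D_g ∩ D_{gh}
  act_range : ∀ g h x, e g⁻¹ * x = x → e h * x = x → e (g * h) * act g x = act g x
  act_range' : ∀ g h y, e g * y = y → e (g * h) * y = y →
    ∃ x, e g⁻¹ * x = x ∧ e h * x = x ∧ act g x = y
  -- α_g ∘ α_h = α_{gh} on α_{h⁻¹}(D_h ∩ D_{g⁻¹})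
  comp : ∀ g h a, e h⁻¹ * a = a → e (h⁻¹ * g⁻¹) * a = a →
    act g (act h a) = act (g * h) a

/-- A realization of the partial skew group ring `R *_α G`:  a ring `A` with
maps `δ g : D g → A` such that `A = ⊕_{g ∈ G} D g δ_g` with multiplication
`(a δ_g)(b δ_h) = α_g(α_{g⁻¹}(a) b) δ_{gh}`. -/
structure IsPartialSkewGroupRing {G R : Type} [Group G] [Ring R]
    (pa : PartialAction G R) (A : Type) [Ring A] (δ : G → R → A) : Prop where
  proj : ∀ g a, δ g a = δ g (pa.e g * a)
  add : ∀ g a b, δ g (a + b) = δ g a + δ g b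
  mul : ∀ g h a b, pa.e g * a = a → pa.e h * b = b →
    δ g a * δ h b = δ (g * h) (pa.act g (pa.act g⁻¹ a * b))
  one : δ 1 1 = 1
  indep : ∀ (s : Finset G) (a : G → R), (∀ g, pa.e g * a g = a g) →
    (∑ g ∈ s, δ g (a g)) = 0 → ∀ g ∈ s, a g = 0
  span : ∀ x : A, ∃ (s : Finset G) (a : G → R),
    (∀ g, pa.e g * a g = a g) ∧ x = ∑ g ∈ s, δ g (a g)

/-- A partial action is of finite type if there are `g₁, …, gₙ ∈ G` with
`D_{g g₁} + ⋯ + D_{g gₙ} = R` for every `g ∈ G`. -/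
def PartialAction.FiniteType {G R : Type} [Group G] [Ring R]
    (pa : PartialAction G R) : Prop :=
  ∃ s : Finset G, ∀ g : G, ∃ a : G → R,
    (∀ i, pa.e (g * i) * a i = a i) ∧ ∑ i ∈ s, a i = 1
/-!
The partial action is the restriction of the translation action of `ℤ` on itself to the
two-point set `X = {0, 1}`, read on `K`-valued functions on `X` (`e₁`, `e₂` are the indicators
of `0` and `1`): `D_n` consists of the functions supported on `X ∩ (X + n)`, which is empty
for `|n| ≥ 2`. So only finitely many domains are nonzero, and since `ℤ` is infinite, every
finite `s` has a translate `g + s` on which all domains vanish; this rules out finite type.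
On the other hand `α` is `K`-linear, so `k ↦ (k, k) δ₀` makes any partial skew group ring a
`K`-algebra, spanned by the finitely many finite-dimensional pieces `D_n δ_n`; a
finite-dimensional algebra is artinian on both sides.
-/

open Pointwise

namespace PartialAction

variable {G R : Type} [Group G] [Ring R] (pa : PartialAction G R)

theorem act_act_inv {g : G} {x : R} (hx : pa.e g * x = x) : pa.act g (pa.act g⁻¹ x) = x := by
  simpa using pa.inv_act g⁻¹ x (by rwa [inv_inv])

theorem not_finiteType_of_finite_support [Infinite G] [Nontrivial R]
    (hfin : (Function.support pa.e).Finite) : ¬ pa.FiniteType := by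
  rintro ⟨s, hs⟩
  obtain ⟨g, hg⟩ := (hfin.mul s.finite_toSet.inv).exists_notMem
  obtain ⟨a, ha, hsum⟩ := hs g
  have hzero : ∀ i ∈ s, a i = 0 := fun i hi => by
    have he : pa.e (g * i) = 0 := by
      by_contra h
      exact hg (Set.mem_mul.mpr ⟨g * i, h, i⁻¹, by simpa using hi, by group⟩)
    rw [← ha i, he, zero_mul]
  exact one_ne_zero (hsum.symm.trans (Finset.sum_eq_zero hzero))

end PartialAction

namespace IsPartialSkewGroupRing

variable {G R A : Type} [Group G] [Ring R] [Ring A] {pa : PartialAction G R}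
  {δ : G → R → A} (hA : IsPartialSkewGroupRing pa A δ)
include hA

theorem apply_zero (g : G) : δ g 0 = 0 := by
  simpa using hA.add g 0 0

theorem one_mul_of_mem (c : R) {g : G} {a : R} (ha : pa.e g * a = a) :
    δ 1 c * δ g a = δ g (c * a) := by
  simpa [pa.act_one] using hA.mul 1 g c a (by rw [pa.e_one, one_mul]) ha

variable (K : Type) [CommRing K] [Algebra K R]

def scalar : K →+* A where
  toFun k := δ 1 (algebraMap K R k)
  map_one' := by rw [map_one, hA.one]
  map_mul' k l := by
    rw [map_mul, hA.one_mul_of_mem _ (by rw [pa.e_one, one_mul])]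
  map_zero' := by rw [map_zero, hA.apply_zero]
  map_add' k l := by rw [map_add, hA.add]

theorem scalar_mul (k : K) {g : G} {a : R} (ha : pa.e g * a = a) :
    hA.scalar K k * δ g a = δ g (k • a) := by
  rw [Algebra.smul_def, ← hA.one_mul_of_mem _ ha]
  rfl

variable {K} (hlin : ∀ g (k : K) x, pa.e g⁻¹ * x = x → pa.act g (k • x) = k • pa.act g x)
include hlin

theorem mul_scalar (k : K) {g : G} {a : R} (ha : pa.e g * a = a) :
    δ g a * hA.scalar K k = δ g (k • a) := by
  have hmem : pa.e g⁻¹ * pa.act g⁻¹ a = pa.act g⁻¹ a := by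
    simpa using pa.act_mem g⁻¹ a (by rwa [inv_inv])
  rw [scalar, RingHom.coe_mk, MonoidHom.coe_mk, OneHom.coe_mk,
    hA.mul g 1 a _ ha (by rw [pa.e_one, one_mul]), mul_one, ← Algebra.commutes,
    ← Algebra.smul_def, hlin g k _ hmem, pa.act_act_inv ha]

theorem scalar_commute (k : K) (x : A) : hA.scalar K k * x = x * hA.scalar K k := by
  obtain ⟨s, a, ha, rfl⟩ := hA.span x
  simp only [Finset.mul_sum, Finset.sum_mul, hA.scalar_mul K k (ha _), hA.mul_scalar hlin k (ha _)]

abbrev algebra : Algebra K A := (hA.scalar K).toAlgebra' (hA.scalar_commute hlin)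

def linearMap (g : G) : letI := hA.algebra hlin; R →ₗ[K] A :=
  letI := hA.algebra hlin
  { toFun := δ g
    map_add' := hA.add g
    map_smul' k x := by
      have hmem : pa.e g * (pa.e g * x) = pa.e g * x := by rw [← mul_assoc, pa.idem]
      rw [RingHom.id_apply, hA.proj g x, hA.proj g (k • x), mul_smul_comm,
        ← hA.scalar_mul K k hmem]
      rfl }

theorem finite [Module.Finite K R] (hfin : (Function.support pa.e).Finite) :
    letI := hA.algebra hlin; Module.Finite K A := by
  let := hA.algebra hlin
  refine Module.finite_def.mpr ?_
  have hsup : hfin.toFinset.sup (fun g => LinearMap.range (hA.linearMap hlin g)) = ⊤ := by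
    refine Submodule.eq_top_iff'.mpr fun x => ?_
    obtain ⟨s, a, ha, rfl⟩ := hA.span x
    refine Submodule.sum_mem _ fun g _ => ?_
    by_cases hg : pa.e g = 0
    · rw [← ha g, hg, zero_mul, hA.apply_zero]
      exact Submodule.zero_mem _
    · exact Finset.le_sup (f := fun g => LinearMap.range (hA.linearMap hlin g))
        (by simpa using hg) (LinearMap.mem_range_self (hA.linearMap hlin g) (a g))
  rw [← hsup]
  exact Submodule.fg_finset_sup _ _ fun g _ => (Module.Finite.iff_fg).mp inferInstance

theorem isRightArtinianRing [IsArtinianRing K] [Module.Finite K R]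
    (hfin : (Function.support pa.e).Finite) : IsRightArtinianRing A := by
  let := hA.algebra hlin
  have := hA.finite hlin hfin
  exact IsArtinianRing.of_finite K Aᵐᵒᵖ

end IsPartialSkewGroupRing

namespace TwoPointShift

variable {K : Type}

/-- Translation by `n`. It only matters on `D_{-n}`, which for `n ≠ 0` is at most one coordinate
wide, so a swap serves for every `n ≠ 0`. -/
def shift (n : ℤ) (x : K × K) : K × K := if n = 0 then x else x.swap

theorem shift_neg (n : ℤ) : (shift (-n) : K × K → K × K) = shift n := by
  funext x
  simp [shift]

theorem shift_shift (n : ℤ) (x : K × K) : shift n (shift n x) = x := by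
  by_cases hn : n = 0 <;> simp [shift, hn]

variable [CommRing K]

/-- The unit of `D_n`: the indicator of `X ∩ (X + n)`, the coordinates being the points `0, 1`. -/
def idem (n : ℤ) : K × K :=
  (if n = 0 ∨ n = -1 then 1 else 0, if n = 0 ∨ n = 1 then 1 else 0)

theorem idem_mul_eq_self_iff {n : ℤ} {x : K × K} :
    idem n * x = x ↔ (n = 0 ∨ n = -1 ∨ x.1 = 0) ∧ (n = 0 ∨ n = 1 ∨ x.2 = 0) := by
  simp only [idem, Prod.ext_iff, Prod.fst_mul, Prod.snd_mul, boole_mul, ite_eq_left_iff,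
    or_iff_not_imp_left, eq_comm (a := (0 : K))]
  tauto

theorem idem_zero : (idem 0 : K × K) = 1 := by
  simp [idem]

theorem idem_eq_zero {n : ℤ} (h0 : n ≠ 0) (h1 : n ≠ 1) (hm1 : n ≠ -1) : (idem n : K × K) = 0 := by
  simp [idem, h0, h1, hm1]

theorem idem_mul_idem (n : ℤ) : (idem n : K × K) * idem n = idem n := by
  simp only [idem, Prod.mk_mul_mk]
  split_ifs <;> simp

theorem idem_mul_shift {n m : ℤ} {x : K × K} (hn : idem (-n) * x = x) (hm : idem m * x = x) :
    idem (n + m) * shift n x = shift n x := by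
  rw [idem_mul_eq_self_iff] at *
  by_cases h0 : n = 0
  · simpa [shift, h0] using hm
  · simp only [shift, h0, if_false, Prod.fst_swap, Prod.snd_swap]
    by_cases h1 : x.1 = 0 <;> by_cases h2 : x.2 = 0 <;> 
      simp_all only [neg_eq_zero, neg_inj, Int.reduceNeg, or_true, or_false, false_or, true_and,
        and_true, one_ne_zero, not_false_eq_true, add_eq_left] <;> omega

theorem eq_zero_of_idem_mul {i j : ℤ} {x : K × K} (hi : i ≠ 0) (hj : j ≠ 0) (hij : i ≠ j)
    (hxi : idem i * x = x) (hxj : idem j * x = x) : x = 0 := by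
  rw [idem_mul_eq_self_iff] at hxi hxj
  ext <;> by_contra hx <;> simp_all

theorem shift_shift_of_mem {n m : ℤ} {x : K × K} (hm : idem (-m) * x = x)
    (hnm : idem (-m + -n) * x = x) : shift n (shift m x) = shift (n + m) x := by
  by_cases hn : n = 0
  · simp [hn, shift]
  by_cases hm0 : m = 0
  · simp [hm0, shift]
  by_cases hnm0 : n + m = 0
  · obtain rfl : n = -m := by omega
    rw [shift_neg, shift_shift, neg_add_cancel]
    simp [shift]
  rw [eq_zero_of_idem_mul (by omega) (by omega) (by omega) hm hnm]
  simp [shift]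

theorem shift_smul (n : ℤ) (k : K) (x : K × K) : shift n (k • x) = k • shift n x := by
  by_cases hn : n = 0 <;> simp [shift, hn]

def partialAction : PartialAction (Multiplicative ℤ) (K × K) where
  e g := idem g.toAdd
  idem g := idem_mul_idem _
  central _ _ := mul_comm _ _
  e_one := idem_zero
  act g := shift g.toAdd
  act_mem g x hx := by
    simpa using idem_mul_shift (m := 0) hx (by rw [idem_zero, one_mul])
  act_add g x y _ _ := by by_cases hg : g.toAdd = 0 <;> simp [shift, hg]
  act_mul g x y _ _ := by by_cases hg : g.toAdd = 0 <;> simp [shift, hg]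
  act_one x := by simp [shift]
  inv_act g x _ := by simp [shift_neg, shift_shift]
  act_range g h x hg hh := idem_mul_shift hg hh
  act_range' g h y hg hgh := by
    refine ⟨shift g.toAdd y, ?_, ?_, shift_shift _ _⟩
    · simpa [shift_neg] using idem_mul_shift (n := -g.toAdd) (m := 0) (by simpa using hg)
        (by rw [idem_zero, one_mul])
    · simpa [shift_neg] using idem_mul_shift (n := -g.toAdd) (by simpa using hg) hgh
  comp g h a hh hgh := shift_shift_of_mem hh (by simpa using hgh)

theorem finite_support_partialAction_e :
    (Function.support (partialAction (K := K)).e).Finite := by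
  refine (Set.toFinite (Multiplicative.ofAdd '' {0, 1, -1})).subset fun g hg => ?_
  by_contra hg'
  simp only [Set.mem_image, Set.mem_insert_iff, Set.mem_singleton_iff] at hg'
  exact hg (idem_eq_zero (fun h => hg' ⟨_, .inl h, rfl⟩) (fun h => hg' ⟨_, .inr (.inl h), rfl⟩)
    fun h => hg' ⟨_, .inr (.inr h), rfl⟩)

end TwoPointShift

/-- There is a unital partial action `α` of `ℤ` on
`R = K e₁ ⊕ K e₂ ≅ K × K` (`K` a field) with `D₀ = R`, `D₁ = K e₂`,
`D₋₁ = K e₁`, `D_i = 0` for `|i| ≥ 2`, `α₁(e₁) = e₂`, `α₋₁(e₂) = e₁`, such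
that every realization of the partial skew group ring `R *_α ℤ` is right
artinian, while `ℤ` is infinite and `α` is not of finite type. -/
theorem exists_partialAction_int_rightArtinian_not_finiteType
    (K : Type) [Field K] :
    ∃ pa : PartialAction (Multiplicative ℤ) (K × K),
      pa.e (Multiplicative.ofAdd 0) = 1 ∧
      pa.e (Multiplicative.ofAdd 1) = (0, 1) ∧
      pa.e (Multiplicative.ofAdd (-1)) = (1, 0) ∧
      (∀ i : ℤ, i ≠ 0 → i ≠ 1 → i ≠ -1 → pa.e (Multiplicative.ofAdd i) = 0) ∧
      pa.act (Multiplicative.ofAdd 1) (1, 0) = (0, 1) ∧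
      pa.act (Multiplicative.ofAdd (-1)) (0, 1) = (1, 0) ∧
      ¬ pa.FiniteType ∧
      Infinite (Multiplicative ℤ) ∧
      (∀ (A : Type) [Ring A] (δ : Multiplicative ℤ → K × K → A),
        IsPartialSkewGroupRing pa A δ → IsRightArtinianRing A) := by
  open TwoPointShift in
  refine ⟨partialAction, idem_zero, by simp [partialAction, idem], by simp [partialAction, idem],
    fun i => idem_eq_zero, by simp [partialAction, shift], by simp [partialAction, shift],
    partialAction.not_finiteType_of_finite_support finite_support_partialAction_e,
    inferInstance, fun A _ δ hA => hA.isRightArtinianRing (fun _ _ _ _ => shift_smul _ _ _)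
      finite_support_partialAction_e⟩
end

section
/- Let α be a unital twisted partial action of a group G on a unital ring R such that only finitely many of the ideals D_g are nonzero. Then R is right noetherian if and only if the partial crossed product R*_{α,w}G is right noetherian. -/
/-!
`δ 1` embeds `R` into the crossed product `A`, and every `a δ_g` factors as
`α_g(1_{g⁻¹}) δ_g · δ_1(α_g⁻¹(a))`. Hence, when only finitely many `1_g` are nonzero, `A` is a
finitely generated right `R`-module, and so right noetherian whenever `R` is. Conversely, the
coefficient of `δ_1` is a left `R`-linear retraction `A → R` of `δ 1`, so `I ↦ I A` embeds the
right ideals of `R` into those of `A`.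
-/

open MulOpposite Finset

theorem IsNoetherianRing.of_retraction {S T : Type*} [Ring S] [Ring T] [IsNoetherianRing T]
    (φ : S →+* T) (π : T →+ S) (hπφ : Function.LeftInverse π φ)
    (hπ : ∀ t s, π (t * φ s) = π t * s) : IsNoetherianRing S := by
  -- `pull J` is the largest left ideal mapped into `J` by `π`; it contains `φ J`, so `π`
  -- recovers `J` from `J.map φ`.
  let pull (J : Ideal S) : Ideal T :=
    { carrier := {t | ∀ u, π (u * t) ∈ J}
      add_mem' := fun ha hb u => by rw [mul_add, map_add]; exact J.add_mem (ha u) (hb u)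
      zero_mem' := fun u => by rw [mul_zero, map_zero]; exact J.zero_mem
      smul_mem' := fun c t ht u => by rw [smul_eq_mul, ← mul_assoc]; exact ht (u * c) }
  have map_le_pull (J : Ideal S) : J.map φ ≤ pull J := Ideal.span_le.2 <| by
    rintro _ ⟨s, hs, rfl⟩ u
    rw [hπ]
    exact J.mul_mem_left _ hs
  have le_of_map_le (I J : Ideal S) (h : I.map φ ≤ J.map φ) : I ≤ J := fun s hs => by
    simpa [hπφ s] using map_le_pull J (h (Ideal.mem_map_of_mem φ hs)) 1
  rw [isNoetherianRing_iff, isNoetherian_iff']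
  exact (OrderEmbedding.ofMapLEIff (Ideal.map φ)
    fun I J => ⟨le_of_map_le I J, Ideal.map_mono⟩).wellFoundedGT

theorem IsRightNoetherianRing.of_retraction {S T : Type} [Ring S] [Ring T]
    (hT : IsRightNoetherianRing T) (φ : S →+* T) (π : T →+ S) (hπφ : Function.LeftInverse π φ)
    (hπ : ∀ s t, π (φ s * t) = s * π t) : IsRightNoetherianRing S :=
  haveI : IsNoetherianRing Tᵐᵒᵖ := hT
  IsNoetherianRing.of_retraction (RingHom.op φ) (AddMonoidHom.mulOp π)
    (fun s => congrArg op (hπφ s.unop)) fun t s => congrArg op (hπ s.unop t.unop)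

theorem IsRightNoetherianRing.of_finite_generators {S T ι : Type} [Ring S] [Ring T]
    (hS : IsRightNoetherianRing S) (φ : S →+* T) (s : Finset ι) (v : ι → T)
    (hv : ∀ t, ∃ c : ι → S, t = ∑ i ∈ s, v i * φ (c i)) : IsRightNoetherianRing T := by
  classical
  have : IsNoetherianRing Sᵐᵒᵖ := hS
  let : Module Sᵐᵒᵖ Tᵐᵒᵖ := Module.compHom Tᵐᵒᵖ (RingHom.op φ)
  have : IsScalarTower Sᵐᵒᵖ Tᵐᵒᵖ Tᵐᵒᵖ := ⟨fun a b c => mul_assoc (RingHom.op φ a) b c⟩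
  have : Module.Finite Sᵐᵒᵖ Tᵐᵒᵖ := by
    refine ⟨⟨s.image (op ∘ v), eq_top_iff.2 fun t _ => ?_⟩⟩
    obtain ⟨c, hc⟩ := hv t.unop
    rw [← op_unop t, hc, Finset.op_sum]
    refine Submodule.sum_mem _ fun i hi => ?_
    rw [op_mul]
    exact Submodule.smul_mem _ (op (c i))
      (Submodule.subset_span (Finset.mem_coe.2 (Finset.mem_image_of_mem _ hi)))
  exact isNoetherian_of_tower Sᵐᵒᵖ (isNoetherian_of_isNoetherianRing_of_finite Sᵐᵒᵖ Tᵐᵒᵖ)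

namespace UnitalTwistedPartialAction

variable {G R : Type} [Group G] [Ring R] (pa : UnitalTwistedPartialAction G R)

theorem inv_one_apply (x : R) : pa.inv 1 x = x := by
  simpa [pa.act_one] using pa.inv_act 1 x (by rw [inv_one, pa.e_one, one_mul])

end UnitalTwistedPartialAction

namespace IsCrossedProduct

variable {G R A : Type} [Group G] [Ring R] [Ring A] {pa : UnitalTwistedPartialAction G R}
  {δ : G → R → A} (hcp : IsCrossedProduct pa A δ)
include hcp

theorem delta_zero (g : G) : δ g 0 = 0 := (AddMonoidHom.mk' (δ g) (hcp.add g)).map_zero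

theorem delta_sub (g : G) (a b : R) : δ g (a - b) = δ g a - δ g b :=
  (AddMonoidHom.mk' (δ g) (hcp.add g)).map_sub a b

theorem e_mul_eq_of_sum_delta_eq {u : Finset G} {a b : G → R}
    (h : ∑ g ∈ u, δ g (a g) = ∑ g ∈ u, δ g (b g)) {g : G} (hg : g ∈ u) :
    pa.e g * a g = pa.e g * b g := by
  rw [← sub_eq_zero, ← mul_sub]
  refine hcp.indep u (fun g => pa.e g * (a g - b g))
    (fun g => by rw [← mul_assoc, pa.idem]) ?_ g hg
  simp_rw [← hcp.proj, hcp.delta_sub, sum_sub_distrib, h, sub_self]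

theorem delta_one_mul (m : R) {h : G} {b : R} (hb : pa.e h * b = b) :
    δ 1 m * δ h b = δ h (m * b) := by
  rw [hcp.mul 1 h m b (by rw [pa.e_one, one_mul]) hb, one_mul, pa.act_one, pa.inv_one_apply,
    pa.w_one_left, mul_assoc, ← pa.central, hb]

def deltaOneHom : R →+* A where
  toFun := δ 1
  map_one' := hcp.one
  map_mul' a b := by rw [hcp.delta_one_mul a (by rw [pa.e_one, one_mul])]
  map_zero' := hcp.delta_zero 1
  map_add' := hcp.add 1

theorem delta_act_mul_delta_one {g : G} {a : R} (ha : pa.e g * a = a) :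
    δ g (pa.act g (pa.e g⁻¹)) * δ 1 (pa.inv g a) = δ g a := by
  obtain ⟨x, hx, -, rfl⟩ := pa.act_range' g 1 a ha (by rwa [mul_one])
  rw [hcp.mul g 1 _ _ (pa.act_mem g _ (pa.idem g⁻¹)) (by rw [pa.e_one, one_mul]), mul_one,
    pa.inv_act g _ (pa.idem g⁻¹), pa.w_one_right, pa.inv_act g x hx, hx,
    ← pa.central g, pa.act_mem g x hx]

/-- The `g`-th coordinate of `x` in the decomposition `A = ⊕ g, δ g (D g)`. -/
noncomputable def coeff (x : A) (g : G) : R :=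
  open Classical in
  if g ∈ (hcp.span x).choose then (hcp.span x).choose_spec.choose g else 0

theorem e_mul_coeff (x : A) (g : G) : pa.e g * hcp.coeff x g = hcp.coeff x g := by
  unfold coeff
  split_ifs
  exacts [(hcp.span x).choose_spec.choose_spec.1 g, mul_zero _]

theorem exists_sum_delta_coeff (x : A) :
    ∃ s : Finset G, (∀ g ∉ s, hcp.coeff x g = 0) ∧ ∑ g ∈ s, δ g (hcp.coeff x g) = x := by
  obtain ⟨-, hx⟩ := (hcp.span x).choose_spec.choose_spec
  refine ⟨(hcp.span x).choose, fun g hg => by simp [coeff, hg], ?_⟩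
  exact (sum_congr rfl fun g hg => by simp [coeff, hg]).trans hx.symm

theorem sum_delta_coeff {x : A} {u : Finset G} (hu : ∀ g ∉ u, hcp.coeff x g = 0) :
    ∑ g ∈ u, δ g (hcp.coeff x g) = x := by
  classical
  obtain ⟨s, hs, hx⟩ := hcp.exists_sum_delta_coeff x
  calc ∑ g ∈ u, δ g (hcp.coeff x g)
      = ∑ g ∈ u ∪ s, δ g (hcp.coeff x g) :=
        sum_subset subset_union_left fun g _ hg => by rw [hu g hg, hcp.delta_zero]
    _ = ∑ g ∈ s, δ g (hcp.coeff x g) :=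
        (sum_subset subset_union_right fun g _ hg => by rw [hs g hg, hcp.delta_zero]).symm
    _ = x := hx

theorem coeff_sum_delta [DecidableEq G] (s : Finset G) (a : G → R) (g : G) :
    hcp.coeff (∑ h ∈ s, δ h (a h)) g = if g ∈ s then pa.e g * a g else 0 := by
  set x := ∑ h ∈ s, δ h (a h)
  obtain ⟨t, ht, -⟩ := hcp.exists_sum_delta_coeff x
  have hsum : ∑ h ∈ s ∪ t, δ h (hcp.coeff x h) = ∑ h ∈ s ∪ t, δ h (if h ∈ s then a h else 0) := by
    simp_rw [apply_ite (δ _), hcp.delta_zero, sum_ite_mem, union_inter_cancel_left]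
    exact hcp.sum_delta_coeff fun h hh => ht h (notMem_union.1 hh).2
  by_cases hg : g ∈ s ∪ t
  · rw [← hcp.e_mul_coeff, hcp.e_mul_eq_of_sum_delta_eq hsum hg, mul_ite, mul_zero]
  · rw [notMem_union] at hg
    rw [ht g hg.2, if_neg hg.1]

theorem coeff_eq_of_sum_delta_eq {x : A} {u : Finset G} {c : G → R}
    (hc : ∀ g, pa.e g * c g = c g) (hu : ∀ g ∉ u, c g = 0) (hx : ∑ g ∈ u, δ g (c g) = x) :
    hcp.coeff x = c := by
  classical
  funext g
  rw [← hx, coeff_sum_delta]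
  split_ifs with hg
  exacts [hc g, (hu g hg).symm]

theorem coeff_add (x y : A) (g : G) :
    hcp.coeff (x + y) g = hcp.coeff x g + hcp.coeff y g := by
  classical
  obtain ⟨s, hs, -⟩ := hcp.exists_sum_delta_coeff x
  obtain ⟨t, ht, -⟩ := hcp.exists_sum_delta_coeff y
  refine congrFun (hcp.coeff_eq_of_sum_delta_eq (u := s ∪ t) (c := hcp.coeff x + hcp.coeff y)
    (fun g => by rw [Pi.add_apply, mul_add, hcp.e_mul_coeff, hcp.e_mul_coeff])
    (fun g hg => ?_) ?_) g
  · rw [notMem_union] at hg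
    rw [Pi.add_apply, hs g hg.1, ht g hg.2, add_zero]
  · simp_rw [Pi.add_apply, hcp.add, sum_add_distrib]
    rw [hcp.sum_delta_coeff fun g hg => hs g (notMem_union.1 hg).1,
      hcp.sum_delta_coeff fun g hg => ht g (notMem_union.1 hg).2]

noncomputable def coeffHom (g : G) : A →+ R :=
  AddMonoidHom.mk' (hcp.coeff · g) (hcp.coeff_add · · g)

theorem coeff_delta_one_mul (m : R) (x : A) (g : G) :
    hcp.coeff (δ 1 m * x) g = m * hcp.coeff x g := by
  obtain ⟨s, hs, hx⟩ := hcp.exists_sum_delta_coeff x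
  refine congrFun (hcp.coeff_eq_of_sum_delta_eq (u := s) (c := fun g => m * hcp.coeff x g)
    (fun g => by rw [← mul_assoc, pa.central, mul_assoc, hcp.e_mul_coeff])
    (fun g hg => by rw [hs g hg, mul_zero]) ?_) g
  conv_rhs => rw [← hx, mul_sum]
  exact sum_congr rfl fun g _ => (hcp.delta_one_mul m (hcp.e_mul_coeff x g)).symm

theorem coeff_delta_one_one (m : R) : hcp.coeff (δ 1 m) 1 = m := by
  classical
  simpa [pa.e_one] using hcp.coeff_sum_delta {1} (fun _ => m) 1

theorem exists_eq_sum_delta_act_mul_delta_one {u : Finset G} (hu : ∀ g, pa.e g ≠ 0 → g ∈ u)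
    (x : A) : ∃ c : G → R, x = ∑ g ∈ u, δ g (pa.act g (pa.e g⁻¹)) * δ 1 (c g) := by
  have hx : ∀ g ∉ u, hcp.coeff x g = 0 := fun g hg => by
    rw [← hcp.e_mul_coeff, not_not.1 (mt (hu g) hg), zero_mul]
  refine ⟨fun g => pa.inv g (hcp.coeff x g), ?_⟩
  exact (hcp.sum_delta_coeff hx).symm.trans
    (sum_congr rfl fun g _ => (hcp.delta_act_mul_delta_one (hcp.e_mul_coeff x g)).symm)

end IsCrossedProduct

/-- Let `α` be a unital twisted partial action of `G` on `R`
such that only finitely many of the ideals `D_g` are nonzero.  Then `R` is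
right noetherian if and only if `R*_{α,w}G` is right noetherian. -/
theorem crossedProduct_rightNoetherian_iff_of_finite_support
    {G R : Type} [Group G] [Ring R]
    (pa : UnitalTwistedPartialAction G R)
    (hfin : {g : G | pa.e g ≠ 0}.Finite)
    (A : Type) [Ring A] (δ : G → R → A)
    (hcp : IsCrossedProduct pa A δ) :
    IsRightNoetherianRing R ↔ IsRightNoetherianRing A :=
  ⟨fun hR => hR.of_finite_generators hcp.deltaOneHom hfin.toFinset _
      (hcp.exists_eq_sum_delta_act_mul_delta_one fun _ hg => hfin.mem_toFinset.2 hg),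
    fun hA => hA.of_retraction hcp.deltaOneHom (hcp.coeffHom 1) hcp.coeff_delta_one_one
      fun m x => hcp.coeff_delta_one_mul m x 1⟩
end
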